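/- arXiv:1205.6422 — 6 statements merged into one kernel-verified Lean document; each statement's English description precedes it below -/
import Mathlib

section
/- For every Tychonoff space X, the subspace ζX = X ∪ cl_{βX}(βX \ υX) of βX is pseudocompact. -/
open Set Topology

/-- A zero-set: the preimage of `{0}` under a continuous real-valued function. -/
def IsZeroSet {Y : Type*} [TopologicalSpace Y] (Z : Set Y) : Prop :=
  ∃ f : C(Y, ℝ), Z = f ⁻¹' {0}

/-- A cozero-set: the complement of a zero-set. -/
def IsCozeroSet {Y : Type*} [TopologicalSpace Y] (C : Set Y) : Prop :=
  IsZeroSet Cᶜ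

/-- A space is pseudocompact if every continuous real-valued function on it is bounded. -/
def IsPseudocompact (Y : Type*) [TopologicalSpace Y] : Prop :=
  ∀ f : C(Y, ℝ), ∃ M : ℝ, ∀ y, |f y| ≤ M

/-- A subset is pseudocompact if it is pseudocompact as a subspace. -/
def IsPseudocompactSet {Y : Type*} [TopologicalSpace Y] (A : Set Y) : Prop :=
  ∀ f : C(A, ℝ), ∃ M : ℝ, ∀ a, |f a| ≤ M

/-- The Hewitt realcompactification `υX`, realized as the subspace of `βX` consisting of
those `p ∈ βX` such that every zero-set of `βX` containing `p` meets `X`. -/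
def upsilonSet (X : Type*) [TopologicalSpace X] : Set (StoneCech X) :=
  {p | ∀ Z : Set (StoneCech X), IsZeroSet Z → p ∈ Z →
    (Z ∩ Set.range (stoneCechUnit : X → StoneCech X)).Nonempty}

/-- `ζX = X ∪ cl_{βX}(βX \ υX)`, as a subset of `βX`. -/
def zetaSet (X : Type*) [TopologicalSpace X] : Set (StoneCech X) :=
  Set.range (stoneCechUnit : X → StoneCech X) ∪ closure (upsilonSet X)ᶜ

/-!
Given `f : C(T, ℝ)` with `X ⊆ T ⊆ βX`, extend `1 / (1 + |f|)` from `X` to `H : βX → [0, 1]`.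
Since `X` is dense in `T`, `H * (1 + |f|) = 1` on all of `T`. A zero of `H` lies in a zero-set of
`βX` missing `X`, so outside `υX`; hence once `T ⊇ βX \ υX`, `H` has no zeros at all, is bounded
below by some `δ > 0` on the compact space `βX`, and `|f| ≤ 1 / H ≤ 1 / δ` on `T`.
-/

section

variable {X : Type*} [TopologicalSpace X]

theorem exists_stoneCech_extension_Icc {g : X → ℝ} (hg : Continuous g) {a b : ℝ}
    (hab : ∀ x, g x ∈ Icc a b) :
    ∃ G : C(StoneCech X, ℝ), (∀ x, G (stoneCechUnit x) = g x) ∧ ∀ p, G p ∈ Icc a b := by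
  have hg' : Continuous (codRestrict g (Icc a b) hab) := hg.codRestrict hab
  exact ⟨⟨_, continuous_subtype_val.comp (continuous_stoneCechExtend hg')⟩,
    fun x => congrArg Subtype.val (stoneCechExtend_stoneCechUnit hg' x), fun p => Subtype.prop _⟩

theorem notMem_upsilonSet_of_apply_eq_zero {h : C(StoneCech X, ℝ)} {p : StoneCech X}
    (hp : h p = 0) (hX : ∀ x, h (stoneCechUnit x) ≠ 0) : p ∉ upsilonSet X := fun hυ =>
  let ⟨_, hq, x, hx⟩ := hυ _ ⟨h, rfl⟩ hp
  hX x (hx ▸ hq)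

theorem isPseudocompactSet_of_compl_upsilonSet_subset {T : Set (StoneCech X)}
    (hX : range stoneCechUnit ⊆ T) (hυ : (upsilonSet X)ᶜ ⊆ T) : IsPseudocompactSet T := by
  intro f
  set e : X → T := codRestrict stoneCechUnit T fun x => hX (mem_range_self x)
  have he : Continuous e := continuous_stoneCechUnit.codRestrict _
  have hdense : DenseRange e :=
    ((denseRange_inclusion_iff hX).2 (by simp [denseRange_stoneCechUnit.closure_range])).comp
      rangeFactorization_surjective.denseRange (continuous_inclusion hX)
  obtain ⟨H, hH, hH01⟩ := exists_stoneCech_extension_Icc (g := fun x => (1 + |f (e x)|)⁻¹)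
    (by fun_prop (disch := intro; positivity))
    fun x => ⟨by positivity, inv_le_one_of_one_le₀ (le_add_of_nonneg_right (abs_nonneg _))⟩
  have hHf : ∀ a : T, H a * (1 + |f a|) = 1 := by
    refine fun a => hdense.induction_on a (isClosed_eq (by fun_prop) continuous_const) fun x => ?_
    exact (hH x).symm ▸ inv_mul_cancel₀ (by positivity)
  have hHpos : ∀ p, 0 < H p := by
    refine fun p => (hH01 p).1.lt_of_ne' fun hp0 => ?_
    have hpT : p ∈ T := hυ (notMem_upsilonSet_of_apply_eq_zero hp0 fun x => by
      rw [hH]; positivity)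
    simpa [hp0] using hHf ⟨p, hpT⟩
  obtain ⟨δ, hδ, hδH⟩ :=
    isCompact_univ.exists_forall_le' H.continuous.continuousOn fun p _ => hHpos p
  refine ⟨δ⁻¹, fun a => ?_⟩
  calc |f a| ≤ 1 + |f a| := le_add_of_nonneg_left zero_le_one
    _ = (H a)⁻¹ := eq_inv_of_mul_eq_one_right (hHf a)
    _ ≤ δ⁻¹ := inv_anti₀ hδ (hδH _ trivial)

end

theorem zetaSet_isPseudocompact_general (X : Type*) [TopologicalSpace X] :
    IsPseudocompactSet (zetaSet X) :=
  isPseudocompactSet_of_compl_upsilonSet_subset subset_union_left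
    (subset_closure.trans subset_union_right)

/-- For every Tychonoff space `X`, the subspace `ζX = X ∪ cl_{βX}(βX \ υX)` of `βX`
is pseudocompact. -/
theorem zetaSet_isPseudocompact (X : Type*) [TopologicalSpace X] [T2Space X]
    [CompletelyRegularSpace X] :
    IsPseudocompactSet (zetaSet X) :=
  zetaSet_isPseudocompact_general X
end

section
/- (Hager–Johnson) Let U be an open subset of a Tychonoff space X. If the closure of U in υX is compact, then the closure of U in X is pseudocompact. -/
/-!
The closure of `U` in `βX` is closed in the compact set `cl_{βX} U ∩ υX`, hence lies in `υX`.
For a continuous `G : X → ℝ`, the extension of `(1 + |G|)⁻¹` to `βX` cannot vanish at a point of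
`υX` (its zero-set would meet `X`), so it is bounded below on the compact set `cl_{βX} U`, and `G`
is bounded on `U`. On the other hand, if `f` were unbounded on `cl_X U`, the sets
`{x ∈ U | n < |f x|}` would form a locally finite sequence of nonempty open sets of `X` (density
of `U` in `cl_X U` and openness of `U`), and the sum of bump functions of height `n` on them
would be a continuous function on `X` unbounded on `U`.
-/

open Set Topology

open Function

section LocallyFinite

variable {X : Type*} [TopologicalSpace X]

theorem locallyFinite_of_antitone {W : ℕ → Set X} (hW : Antitone W)
    (h : ∀ x, ∃ n, x ∉ closure (W n)) : LocallyFinite W := by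
  intro x
  obtain ⟨n, hn⟩ := h x
  refine ⟨(closure (W n))ᶜ, isClosed_closure.isOpen_compl.mem_nhds hn, ?_⟩
  refine (finite_Iio n).subset fun m ⟨y, hym, hyn⟩ => ?_
  by_contra hmn
  exact hyn (subset_closure (hW (not_lt.1 hmn) hym))

theorem exists_continuous_forall_exists_le_of_locallyFinite [CompletelyRegularSpace X]
    {W : ℕ → Set X} (hWo : ∀ n, IsOpen (W n)) (hWne : ∀ n, (W n).Nonempty)
    (hW : LocallyFinite W) : ∃ G : C(X, ℝ), ∀ n : ℕ, ∃ x ∈ W n, (n : ℝ) ≤ G x := by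
  choose x hxW using hWne
  have hbump : ∀ n, ∃ g : X → ℝ, Continuous g ∧ g (x n) = n ∧ support g ⊆ W n ∧ 0 ≤ g := by
    intro n
    obtain ⟨φ, hφc, hφx, hφW⟩ :=
      CompletelyRegularSpace.completely_regular_isOpen (x n) (W n) (hWo n) (hxW n)
    refine ⟨fun z => n * (1 - φ z), by fun_prop, by simp [hφx], fun z hz => ?_, fun z => ?_⟩
    · by_contra hzW
      simp [hφW hzW] at hz
    · exact mul_nonneg n.cast_nonneg (sub_nonneg.2 unitInterval.le_one')
  choose g hgc hgx hgW hg0 using hbump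
  have hg : LocallyFinite fun n => support (g n) := hW.subset hgW
  refine ⟨⟨fun z => ∑ᶠ n, g n z, continuous_finsum hgc hg⟩, fun n => ⟨x n, hxW n, ?_⟩⟩
  calc (n : ℝ) = g n (x n) := (hgx n).symm
    _ ≤ ∑ᶠ m, g m (x n) := single_le_finsum n (hg.point_finite (x n)) fun m => hg0 m (x n)

end LocallyFinite

section Superlevel

variable {X : Type*} [TopologicalSpace X] {U : Set X}

/-- `{x ∈ U | c < |f x|}`. -/
def superlevelAbs (U : Set X) (f : C(closure U, ℝ)) (c : ℝ) : Set X :=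
  Subtype.val '' {y : U | c < |f (inclusion subset_closure y)|}

variable (f : C(closure U, ℝ))

theorem superlevelAbs_subset (c : ℝ) : superlevelAbs U f c ⊆ U :=
  Subtype.coe_image_subset U _

theorem isOpen_superlevelAbs (hU : IsOpen U) (c : ℝ) : IsOpen (superlevelAbs U f c) :=
  hU.isOpenMap_subtype_val _ <|
    isOpen_lt continuous_const (f.continuous.comp (continuous_inclusion subset_closure)).abs

theorem superlevelAbs_antitone : Antitone (superlevelAbs U f) :=
  fun _ _ hcd => image_mono fun _ hy => hcd.trans_lt hy

theorem superlevelAbs_nonempty {c : ℝ} {a : closure U} (ha : c < |f a|) :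
    (superlevelAbs U f c).Nonempty := by
  obtain ⟨y, hy⟩ := ((denseRange_inclusion_iff subset_closure).2 subset_rfl).exists_mem_open
    (isOpen_lt continuous_const f.continuous.abs) ⟨a, ha⟩
  exact ⟨y, y, hy, rfl⟩

theorem notMem_closure_superlevelAbs {c : ℝ} {x : X} (hx : x ∈ closure U)
    (hc : |f ⟨x, hx⟩| < c) : x ∉ closure (superlevelAbs U f c) := by
  have hclosed : IsClosed (Subtype.val '' {z : closure U | c ≤ |f z|}) :=
    isClosed_closure.isClosedMap_subtype_val _ (isClosed_le continuous_const f.continuous.abs)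
  have hsub : superlevelAbs U f c ⊆ Subtype.val '' {z : closure U | c ≤ |f z|} := by
    rintro _ ⟨y, hy, rfl⟩
    exact ⟨inclusion subset_closure y, show c ≤ _ from le_of_lt hy, rfl⟩
  rintro hxc
  obtain ⟨z, hz, hzx⟩ := closure_minimal hsub hclosed hxc
  obtain rfl : z = ⟨x, hx⟩ := Subtype.ext hzx
  exact (hz.trans_lt hc).false

theorem locallyFinite_superlevelAbs : LocallyFinite fun n : ℕ => superlevelAbs U f n := by
  refine locallyFinite_of_antitone
    (fun m n hmn => superlevelAbs_antitone f (by exact_mod_cast hmn)) fun x => ?_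
  by_cases hx : x ∈ closure U
  · obtain ⟨n, hn⟩ := exists_nat_gt |f ⟨x, hx⟩|
    exact ⟨n, notMem_closure_superlevelAbs f hx hn⟩
  · exact ⟨0, fun h => hx (closure_mono (superlevelAbs_subset f _) h)⟩

end Superlevel

theorem isPseudocompactSet_closure_of_forall_bounded {X : Type*} [TopologicalSpace X]
    [CompletelyRegularSpace X] {U : Set X} (hU : IsOpen U)
    (hbdd : ∀ G : C(X, ℝ), ∃ M, ∀ x ∈ U, |G x| ≤ M) : IsPseudocompactSet (closure U) := by
  intro f
  by_contra! hf
  obtain ⟨G, hG⟩ := exists_continuous_forall_exists_le_of_locallyFinite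
    (W := fun n : ℕ => superlevelAbs U f n) (fun n => isOpen_superlevelAbs f hU n)
    (fun n => superlevelAbs_nonempty f (hf n).choose_spec) (locallyFinite_superlevelAbs f)
  obtain ⟨M, hM⟩ := hbdd G
  obtain ⟨n, hn⟩ := exists_nat_gt M
  obtain ⟨x, hxW, hx⟩ := hG n
  linarith [hM x (superlevelAbs_subset f n hxW), le_abs_self (G x)]

section Upsilon

variable {X : Type*} [TopologicalSpace X]

theorem closure_subset_of_isCompact_closure_inter {Y : Type*} [TopologicalSpace Y] [T2Space Y]
    {S T : Set Y} (hST : S ⊆ T) (h : IsCompact (closure S ∩ T)) : closure S ⊆ T :=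
  (closure_minimal (subset_inter subset_closure hST) h.isClosed).trans inter_subset_right

theorem range_stoneCechUnit_subset_upsilonSet :
    range (stoneCechUnit : X → StoneCech X) ⊆ upsilonSet X := by
  rintro _ ⟨x, rfl⟩ Z - hx
  exact ⟨_, hx, x, rfl⟩

theorem apply_ne_zero_of_mem_upsilonSet (φ : C(StoneCech X, ℝ))
    (hφ : ∀ x, φ (stoneCechUnit x) ≠ 0) {p : StoneCech X} (hp : p ∈ upsilonSet X) : φ p ≠ 0 := by
  intro hp0
  obtain ⟨_, hq, x, rfl⟩ := hp (φ ⁻¹' {0}) ⟨φ, rfl⟩ hp0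
  exact hφ x hq

theorem exists_abs_le_of_closure_image_subset_upsilonSet {U : Set X}
    (hU : closure ((stoneCechUnit : X → StoneCech X) '' U) ⊆ upsilonSet X) (G : C(X, ℝ)) :
    ∃ M, ∀ x ∈ U, |G x| ≤ M := by
  let H : X → Icc (0 : ℝ) 1 :=
    fun x => ⟨(1 + |G x|)⁻¹, by positivity, inv_le_one_of_one_le₀ (by simp)⟩
  have hH : Continuous H := by
    refine Continuous.subtype_mk ?_ _
    exact (continuous_const.add G.continuous.abs).inv₀
      fun x => (by positivity : (0 : ℝ) < 1 + |G x|).ne'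
  let φ : C(StoneCech X, ℝ) :=
    ⟨fun p => (stoneCechExtend hH p).1,
      continuous_subtype_val.comp (continuous_stoneCechExtend hH)⟩
  have hφ : ∀ x, φ (stoneCechUnit x) = (1 + |G x|)⁻¹ := fun x => by simp [φ, H]
  have hφ0 : ∀ x, φ (stoneCechUnit x) ≠ 0 := fun x => by rw [hφ]; positivity
  obtain ⟨C, hC⟩ := isClosed_closure.isCompact.exists_bound_of_continuousOn
    (φ.continuous.continuousOn.inv₀ fun p hp => apply_ne_zero_of_mem_upsilonSet φ hφ0 (hU hp))
  refine ⟨C, fun x hx => ?_⟩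
  have hCx := hC _ (subset_closure (mem_image_of_mem _ hx))
  rw [Pi.inv_apply, hφ, inv_inv, Real.norm_eq_abs, abs_of_pos (by positivity)] at hCx
  linarith

end Upsilon

theorem hager_johnson_general (X : Type*) [TopologicalSpace X] [CompletelyRegularSpace X]
    (U : Set X) (hU : IsOpen U)
    (h : IsCompact (closure ((stoneCechUnit : X → StoneCech X) '' U) ∩ upsilonSet X)) :
    IsPseudocompactSet (closure U) :=
  isPseudocompactSet_closure_of_forall_bounded hU <|
    exists_abs_le_of_closure_image_subset_upsilonSet <|
      closure_subset_of_isCompact_closure_inter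
        ((image_subset_range _ _).trans range_stoneCechUnit_subset_upsilonSet) h

/-- (Hager–Johnson) If `U` is open in a Tychonoff space `X` and the closure of `U` in `υX`
is compact, then the closure of `U` in `X` is pseudocompact. -/
theorem hager_johnson (X : Type*) [TopologicalSpace X] [T2Space X] [CompletelyRegularSpace X]
    (U : Set X) (hU : IsOpen U)
    (h : IsCompact (closure ((stoneCechUnit : X → StoneCech X) '' U) ∩ upsilonSet X)) :
    IsPseudocompactSet (closure U) :=
  hager_johnson_general X U hU h
end

section
/- Let A be a regular closed subset of a Tychonoff space X (i.e., A is the closure in X of an open subset of X). Then cl_{βX} A ⊆ υX if and only if A is pseudocompact. -/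
open Set Topology

/-! If `A` is not pseudocompact, an unbounded continuous function on `A` is large on a sequence
of points of the dense open set `U ⊆ A`, around which one finds a locally finite family of open
sets of `X`; summing bump functions subordinate to it gives `g ∈ C(X)` unbounded on `A`. The
extension of `1 / (1 + |g|)` to `βX` then attains the value `0` on the compact set `cl_{βX} A`,
but has no zero on `X`, so that point lies outside `υX`. Conversely, if `A` is pseudocompact
and `F ∈ C(βX)` has no zero on `X`, then `|F|` is bounded away from `0` on `A`, hence on
`cl_{βX} A`. -/

open scoped unitInterval

theorem LocallyFinite.image_of_isClosedEmbedding {ι Y X : Type*} [TopologicalSpace Y]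
    [TopologicalSpace X] {e : Y → X} (he : IsClosedEmbedding e) {f : ι → Set Y}
    (hf : LocallyFinite f) : LocallyFinite fun i => e '' f i := by
  intro x
  by_cases hx : x ∈ range e
  · obtain ⟨y, rfl⟩ := hx
    obtain ⟨t, ht, hfin⟩ := hf y
    rw [he.isInducing.nhds_eq_comap, Filter.mem_comap] at ht
    obtain ⟨t', ht', hsub⟩ := ht
    refine ⟨t', ht', hfin.subset ?_⟩
    rintro i ⟨_, ⟨z, hz, rfl⟩, hzt⟩
    exact ⟨z, hz, hsub hzt⟩
  · refine ⟨(range e)ᶜ, he.isClosed_range.isOpen_compl.mem_nhds hx, finite_empty.subset ?_⟩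
    rintro i ⟨_, ⟨z, -, rfl⟩, hz⟩
    exact hz (mem_range_self z)

theorem locallyFinite_preimage_Ioo {Y : Type*} [TopologicalSpace Y] {f : Y → ℝ}
    (hf : Continuous f) {c : ℕ → ℝ} (hc : ∀ n : ℕ, n ≤ c n) :
    LocallyFinite fun n => f ⁻¹' Ioo (c n - 1) (c n + 1) := by
  intro y
  refine ⟨f ⁻¹' Iio (f y + 1),
    hf.continuousAt.preimage_mem_nhds (Iio_mem_nhds (lt_add_one _)),
    (finite_Iio ⌈f y + 2⌉₊).subset ?_⟩
  rintro n ⟨z, ⟨hz, -⟩, hzy⟩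
  rw [mem_Iio, Nat.lt_ceil]
  linarith [hc n, show f z < f y + 1 from hzy]

theorem Dense.exists_mem_lt_abs {Y : Type*} [TopologicalSpace Y] {D : Set Y} (hD : Dense D)
    {f : Y → ℝ} (hf : Continuous f) (hunb : ∀ M : ℝ, ∃ y, M < |f y|) (M : ℝ) :
    ∃ y ∈ D, M < |f y| :=
  hD.exists_mem_open (isOpen_lt continuous_const hf.abs) (hunb M)

theorem IsPseudocompactSet.exists_pos_le_abs {Y : Type*} [TopologicalSpace Y] {A : Set Y}
    (hA : IsPseudocompactSet A) (f : C(A, ℝ)) (hf : ∀ a, f a ≠ 0) :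
    ∃ ε > 0, ∀ a, ε ≤ |f a| := by
  obtain ⟨M, hM⟩ := hA ⟨fun a => (f a)⁻¹, f.continuous.inv₀ hf⟩
  refine ⟨(|M| + 1)⁻¹, by positivity, fun a => ?_⟩
  have hinv : |f a|⁻¹ < |M| + 1 := by
    have := hM a
    rw [ContinuousMap.coe_mk, abs_inv] at this
    linarith [le_abs_self M]
  exact (inv_lt_of_inv_lt₀ (abs_pos.2 (hf a)) hinv).le

theorem exists_locallyFinite_of_not_isPseudocompactSet_closure {X : Type*}
    [TopologicalSpace X] {U : Set X} (hU : IsOpen U) (hA : ¬ IsPseudocompactSet (closure U)) :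
    ∃ (u : ℕ → X) (V : ℕ → Set X), (∀ n, IsOpen (V n)) ∧ (∀ n, u n ∈ V n) ∧
      (∀ n, V n ⊆ U) ∧ LocallyFinite V := by
  simp only [IsPseudocompactSet, not_forall, not_exists, not_le] at hA
  obtain ⟨f, hf⟩ := hA
  have hD : Dense ((↑) ⁻¹' U : Set (closure U)) := by
    rw [Subtype.dense_iff, image_preimage_eq_inter_range, Subtype.range_coe,
      inter_eq_left.2 subset_closure]
  choose a haU hfa using fun n : ℕ => hD.exists_mem_lt_abs f.continuous hf n
  have hband : ∀ n, IsOpen ((fun b => |f b|) ⁻¹' Ioo (|f (a n)| - 1) (|f (a n)| + 1)) :=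
    fun n => isOpen_Ioo.preimage f.continuous.abs
  simp only [isOpen_induced_iff] at hband
  choose W hWo hWS using hband
  refine ⟨fun n => a n, fun n => W n ∩ U, fun n => (hWo n).inter hU, fun n => ⟨?_, haU n⟩,
    fun n => inter_subset_right, ?_⟩
  · change a n ∈ (↑) ⁻¹' W n
    rw [hWS]
    constructor <;> linarith
  · have hbands := (locallyFinite_preimage_Ioo f.continuous.abs fun n : ℕ => (hfa n).le)
      |>.image_of_isClosedEmbedding isClosed_closure.isClosedEmbedding_subtypeVal
    refine hbands.subset ?_
    rintro n x ⟨hxW, hxU⟩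
    exact ⟨⟨x, subset_closure hxU⟩, hWS n ▸ hxW, rfl⟩

theorem exists_continuous_nat_le_of_locallyFinite {X : Type*} [TopologicalSpace X]
    [CompletelyRegularSpace X] {V : ℕ → Set X} (hV : ∀ n, IsOpen (V n))
    (hlf : LocallyFinite V) {u : ℕ → X} (hu : ∀ n, u n ∈ V n) : ∃ g : C(X, ℝ), ∀ n : ℕ, n ≤ g (u n) := by
  choose φ hφc hφu hφV using fun n =>
    CompletelyRegularSpace.completely_regular_isOpen (u n) (V n) (hV n) (hu n)
  set ψ : ℕ → X → ℝ := fun n x => n * (1 - φ n x)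
  have hψV : ∀ n, Function.support (ψ n) ⊆ V n := fun n x hx => by
    by_contra hxV
    exact hx (by simp [ψ, hφV n hxV])
  have hψ0 : ∀ n x, 0 ≤ ψ n x := fun n x =>
    mul_nonneg n.cast_nonneg (sub_nonneg.2 (φ n x).2.2)
  refine ⟨⟨fun x => ∑ᶠ n, ψ n x, continuous_finsum (fun n => by fun_prop)
    (hlf.subset hψV)⟩, fun n => ?_⟩
  have := single_le_finsum n ((hlf.point_finite (u n)).subset fun m hm => hψV m hm)
    fun m => hψ0 m (u n)
  simpa [ψ, hφu] using this

theorem mem_upsilonSet_iff {X : Type*} [TopologicalSpace X] {p : StoneCech X} :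
    p ∈ upsilonSet X ↔
      ∀ F : C(StoneCech X, ℝ), (∀ x : X, F (stoneCechUnit x) ≠ 0) → F p ≠ 0 := by
  constructor
  · rintro hp F hF hFp
    obtain ⟨_, hq, x, rfl⟩ := hp _ ⟨F, rfl⟩ hFp
    exact hF x hq
  · rintro hp _ ⟨F, rfl⟩ hFp
    by_contra hne
    exact hp F (fun x hx => hne ⟨stoneCechUnit x, hx, x, rfl⟩) hFp

theorem IsPseudocompactSet.closure_image_subset_upsilonSet {X : Type*} [TopologicalSpace X]
    {A : Set X} (hA : IsPseudocompactSet A) :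
    closure ((stoneCechUnit : X → StoneCech X) '' A) ⊆ upsilonSet X := by
  intro p hp
  refine mem_upsilonSet_iff.2 fun F hF hFp => ?_
  obtain ⟨ε, hε, hle⟩ := hA.exists_pos_le_abs
    (F.comp ⟨stoneCechUnit ∘ (↑), continuous_stoneCechUnit.comp continuous_subtype_val⟩)
    fun a => hF a
  have hcl : closure (stoneCechUnit '' A) ⊆ {q | ε ≤ |F q|} :=
    closure_minimal (by rintro _ ⟨a, ha, rfl⟩; exact hle ⟨a, ha⟩)
      (isClosed_le continuous_const F.continuous.abs)
  have := hcl hp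
  simp only [mem_ofPred_eq, hFp, abs_zero] at this
  linarith

theorem exists_mem_closure_image_notMem_upsilonSet {X : Type*} [TopologicalSpace X]
    {A : Set X} (g : C(X, ℝ)) (hg : ∀ M : ℝ, ∃ a ∈ A, M ≤ g a) :
    ∃ p ∈ closure ((stoneCechUnit : X → StoneCech X) '' A), p ∉ upsilonSet X := by
  let h : C(X, I) := ⟨fun x => ⟨(1 + |g x|)⁻¹, by positivity,
    inv_le_one_of_one_le₀ (le_add_of_nonneg_right (abs_nonneg _))⟩,
    ((continuous_const.add g.continuous.abs).inv₀ fun x =>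
      (by positivity : (0 : ℝ) < 1 + |g x|).ne').subtype_mk _⟩
  let F : C(StoneCech X, ℝ) := ⟨fun q => (stoneCechExtend h.continuous q).1,
    continuous_subtype_val.comp (continuous_stoneCechExtend h.continuous)⟩
  have hF : ∀ x, F (stoneCechUnit x) = (1 + |g x|)⁻¹ := fun x =>
    congr_arg Subtype.val (congrFun (stoneCechExtend_extends h.continuous) x)
  obtain ⟨a₀, ha₀, -⟩ := hg 0
  obtain ⟨p, hp, hmin⟩ := isClosed_closure.isCompact.exists_isMinOn
    ⟨_, subset_closure (mem_image_of_mem _ ha₀)⟩ F.continuous.continuousOn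
  refine ⟨p, hp, fun hpυ => mem_upsilonSet_iff.1 hpυ F (fun x => ?_) ?_⟩
  · rw [hF]; positivity
  · refine le_antisymm ?_ (stoneCechExtend h.continuous p).2.1
    by_contra! hpos
    obtain ⟨a, ha, hga⟩ := hg (F p)⁻¹
    have hle : F p ≤ (1 + |g a|)⁻¹ := hF a ▸ hmin (subset_closure (mem_image_of_mem _ ha))
    have hlt : (1 + |g a|)⁻¹ < F p :=
      inv_lt_of_inv_lt₀ hpos (by linarith [le_abs_self (g a)])
    exact hle.not_gt hlt

theorem isPseudocompactSet_closure_of_subset_upsilonSet {X : Type*} [TopologicalSpace X]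
    [CompletelyRegularSpace X] {U : Set X} (hU : IsOpen U)
    (h : closure ((stoneCechUnit : X → StoneCech X) '' closure U) ⊆ upsilonSet X) :
    IsPseudocompactSet (closure U) := by
  by_contra hA
  obtain ⟨u, V, hVo, huV, hVU, hlf⟩ :=
    exists_locallyFinite_of_not_isPseudocompactSet_closure hU hA
  obtain ⟨g, hg⟩ := exists_continuous_nat_le_of_locallyFinite hVo hlf huV
  have hunb : ∀ M : ℝ, ∃ a ∈ closure U, M ≤ g a := fun M =>
    let ⟨n, hn⟩ := exists_nat_ge M
    ⟨u n, subset_closure (hVU n (huV n)), hn.trans (hg n)⟩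
  obtain ⟨p, hp, hpυ⟩ := exists_mem_closure_image_notMem_upsilonSet g hunb
  exact hpυ (h hp)

theorem closure_subset_upsilon_iff_isPseudocompact_general (X : Type*) [TopologicalSpace X]
    [CompletelyRegularSpace X] (A : Set X) (hA : ∃ U : Set X, IsOpen U ∧ A = closure U) :
    closure ((stoneCechUnit : X → StoneCech X) '' A) ⊆ upsilonSet X ↔ IsPseudocompactSet A := by
  obtain ⟨U, hU, rfl⟩ := hA
  exact ⟨isPseudocompactSet_closure_of_subset_upsilonSet hU,
    IsPseudocompactSet.closure_image_subset_upsilonSet⟩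

/-- For a regular closed subset `A` of a Tychonoff space `X`, `cl_{βX} A ⊆ υX` if and only if
`A` is pseudocompact. -/
theorem closure_subset_upsilon_iff_isPseudocompact (X : Type*) [TopologicalSpace X] [T2Space X]
    [CompletelyRegularSpace X] (A : Set X) (hA : ∃ U : Set X, IsOpen U ∧ A = closure U) :
    closure ((stoneCechUnit : X → StoneCech X) '' A) ⊆ upsilonSet X ↔ IsPseudocompactSet A :=
  closure_subset_upsilon_iff_isPseudocompact_general X A hA
end

section
/- For a Tychonoff space X, the following are equivalent: (1) X is locally pseudocompact; (2) X ⊆ int_{βX} υX; (3) X and R(X) = cl_{βX}(βX \ υX) are disjoint; (4) ζX \ X is compact; (5) X has a pseudocompactification with compact remainder. -/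
open Set Topology

universe u

/-!
If `K = cl_X U` is pseudocompact, its closure in `βX` lies in `υX`: a zero-set `f = 0` of `βX`
missing `X` would make `1 / f` unbounded on `K`. As `U` is the trace of an open set of `βX`
contained in that closure, (1) gives (2), and (2) ⇔ (3) is `cl (βX \ υX) = βX \ int υX`.
Under (3), `ζX \ X = cl (βX \ υX)` is compact; and `ζX` is always pseudocompact, since a
zero-set of `βX` missing `X` lies in `ζX`. Conversely, in a pseudocompactification with compact
remainder each point of `X` has an open neighbourhood whose closure avoids the remainder, and
closures of open sets in pseudocompact Tychonoff spaces are pseudocompact.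
-/

open Function unitInterval

def IsLocallyPseudocompact (X : Type*) [TopologicalSpace X] : Prop :=
  ∀ x : X, ∃ U : Set X, IsOpen U ∧ x ∈ U ∧ IsPseudocompactSet (closure U)

section Pseudocompact

variable {Y Z : Type*} [TopologicalSpace Y] [TopologicalSpace Z]

lemma isPseudocompact_of_compactSpace [CompactSpace Y] : IsPseudocompact Y := fun f => by
  obtain ⟨C, hC⟩ := (isCompact_range (map_continuous f)).isBounded.exists_norm_le
  exact ⟨C, fun y => hC _ (mem_range_self y)⟩

lemma IsPseudocompact.of_surjective (hY : IsPseudocompact Y) {φ : Y → Z} (hφ : Continuous φ)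
    (hsurj : Surjective φ) : IsPseudocompact Z := fun f => by
  obtain ⟨M, hM⟩ := hY (f.comp ⟨φ, hφ⟩)
  exact ⟨M, hsurj.forall.2 hM⟩

lemma IsPseudocompact.exists_pos_le_abs (hY : IsPseudocompact Y) (g : C(Y, ℝ))
    (hg : ∀ y, g y ≠ 0) : ∃ ε > 0, ∀ y, ε ≤ |g y| := by
  obtain ⟨M, hM⟩ := hY ⟨fun y => (g y)⁻¹, (map_continuous g).inv₀ hg⟩
  refine ⟨(|M| + 1)⁻¹, by positivity, fun y => inv_le_of_inv_le₀ (abs_pos.2 (hg y)) ?_⟩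
  have hy : |(g y)⁻¹| ≤ M := hM y
  rw [abs_inv] at hy
  linarith [le_abs_self M]

lemma isPseudocompact_of_forall_pos
    (h : ∀ g : C(Y, ℝ), (∀ y, 0 < g y) → ∃ δ > 0, ∀ y, δ ≤ g y) :
    IsPseudocompact Y := fun f => by
  have hpos : ∀ y, 0 < 1 + |f y| := fun y => by positivity
  obtain ⟨δ, hδ, hle⟩ := h ⟨fun y => (1 + |f y|)⁻¹,
    (continuous_const.add (map_continuous f).abs).inv₀ fun y => (hpos y).ne'⟩
    fun y => inv_pos.2 (hpos y)
  refine ⟨δ⁻¹, fun y => ?_⟩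
  have hy : 1 + |f y| ≤ δ⁻¹ := (le_inv_comm₀ hδ (hpos y)).1 (hle y)
  linarith

lemma locallyFinite_setOf_natCast_lt {φ : Y → ℝ} (hφ : Continuous φ) :
    LocallyFinite fun n : ℕ => {y | (n : ℝ) < φ y} := fun y => by
  refine ⟨{z | φ z < φ y + 1}, (isOpen_lt hφ continuous_const).mem_nhds (lt_add_one (φ y)),
    (finite_Iio ⌈φ y + 1⌉₊).subset ?_⟩
  rintro n ⟨z, hnz, hz⟩
  exact Nat.lt_ceil.2 (lt_trans hnz hz)

lemma LocallyFinite.image_subtypeVal {ι : Type*} {F : Set Y} (hF : IsClosed F) {T : ι → Set F}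
    (hT : LocallyFinite T) : LocallyFinite fun i => ((↑) : F → Y) '' T i := fun y => by
  by_cases hy : y ∈ F
  · obtain ⟨W, hW, hfin⟩ := hT ⟨y, hy⟩
    obtain ⟨W', hW', hW'W⟩ := (mem_nhds_subtype F _ W).1 hW
    refine ⟨W', hW', hfin.subset ?_⟩
    rintro i ⟨_, ⟨a, ha, rfl⟩, haW'⟩
    exact ⟨a, ha, hW'W haW'⟩
  · refine ⟨Fᶜ, hF.isOpen_compl.mem_nhds hy, finite_empty.subset ?_⟩
    rintro i ⟨_, ⟨a, -, rfl⟩, ha⟩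
    exact ha a.2

/-- The bumps `n * (1 - f n)`, with `f n = 1` off `O n`, would sum to an unbounded function. -/
lemma IsPseudocompact.not_locallyFinite [CompletelyRegularSpace Y] (hY : IsPseudocompact Y)
    {O : ℕ → Set Y} (hO : ∀ n, IsOpen (O n)) (hne : ∀ n, (O n).Nonempty) :
    ¬ LocallyFinite O := by
  intro hlf
  choose y hy using hne
  choose f hf hfy hf1 using fun n =>
    CompletelyRegularSpace.completely_regular_isOpen (y n) (O n) (hO n) (hy n)
  let g : ℕ → Y → ℝ := fun n z => n * (1 - f n z)
  have hg : ∀ n, Continuous (g n) := fun n =>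
    continuous_const.mul (continuous_const.sub (continuous_subtype_val.comp (hf n)))
  have hsupp : ∀ n, support (g n) ⊆ O n := fun n z hz =>
    by_contra fun hzO => hz (by simp [g, hf1 n hzO])
  have hg0 : ∀ n z, 0 ≤ g n z := fun n z => mul_nonneg n.cast_nonneg (sub_nonneg.2 (f n z).2.2)
  obtain ⟨M, hM⟩ := hY ⟨fun z => ∑ᶠ n, g n z, continuous_finsum hg (hlf.subset hsupp)⟩
  have hle : ∀ n : ℕ, (n : ℝ) ≤ M := fun n => calc
    (n : ℝ) = g n (y n) := by simp [g, hfy n]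
    _ ≤ ∑ᶠ m, g m (y n) := single_le_finsum n
        ((hlf.point_finite (y n)).subset fun m hm => hsupp m hm) fun m => hg0 m _
    _ ≤ M := (le_abs_self _).trans (hM _)
  obtain ⟨n, hn⟩ := exists_nat_gt M
  linarith [hle n]

/-- An unbounded `φ` on `closure V` yields the open sets `{n < |φ|} ∩ V`, which are nonempty
because `V` is dense in its closure, and locally finite because `closure V` is closed. -/
lemma IsPseudocompact.isPseudocompactSet_closure [CompletelyRegularSpace Y]
    (hY : IsPseudocompact Y) {V : Set Y} (hV : IsOpen V) : IsPseudocompactSet (closure V) := by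
  intro φ
  by_contra! hφ
  have hT : ∀ n : ℕ, IsOpen {a : closure V | (n : ℝ) < |φ a|} := fun n =>
    isOpen_lt continuous_const (map_continuous φ).abs
  choose G hG hGT using fun n => isOpen_induced_iff.1 (hT n)
  refine hY.not_locallyFinite (O := fun n => G n ∩ V) (fun n => (hG n).inter hV) (fun n => ?_) ?_
  · obtain ⟨a, ha⟩ := hφ n
    have haG : a ∈ (↑) ⁻¹' G n := by rw [hGT n]; exact ha
    exact mem_closure_iff.1 a.2 (G n) (hG n) haG
  · refine ((locallyFinite_setOf_natCast_lt (map_continuous φ).abs).image_subtypeVal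
      isClosed_closure).subset fun n y ⟨hyG, hyV⟩ => ⟨⟨y, subset_closure hyV⟩, ?_, rfl⟩
    rw [← hGT n]
    exact hyG

lemma Topology.IsEmbedding.isLocallyPseudocompact [T2Space Y] [CompletelyRegularSpace Y]
    {e : Z → Y} (he : IsEmbedding e) (hY : IsPseudocompact Y) (hK : IsCompact (range e)ᶜ) :
    IsLocallyPseudocompact Z := fun x => by
  obtain ⟨V, W, hV, hW, hxV, hKW, hVW⟩ := SeparatedNhds.of_isCompact_isCompact
    isCompact_singleton hK (disjoint_singleton_left.2 (not_not.2 (mem_range_self x)))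
  have hVe : closure V ⊆ range e :=
    (closure_minimal hVW.subset_compl_right hW.isClosed_compl).trans (compl_subset_comm.1 hKW)
  refine ⟨e ⁻¹' V, hV.preimage he.continuous, hxV rfl, ?_⟩
  rw [he.isInducing.closure_eq_preimage_closure_image,
    image_preimage_eq_of_subset (subset_closure.trans hVe)]
  let h := he.homeomorphOfSubsetRange hVe
  exact IsPseudocompact.of_surjective (hY.isPseudocompactSet_closure hV) h.symm.continuous
    h.symm.surjective

end Pseudocompact

section StoneCech

variable {X : Type*} [TopologicalSpace X]

lemma closure_image_stoneCechUnit_subset_upsilonSet {A : Set X} (hA : IsPseudocompactSet A) :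
    closure (stoneCechUnit '' A) ⊆ upsilonSet X := by
  rintro p hp Z ⟨f, rfl⟩ hpZ
  by_contra hZX
  have hfA : ∀ a : A, f (stoneCechUnit a.1) ≠ 0 := fun a ha => hZX ⟨_, ha, mem_range_self _⟩
  obtain ⟨ε, hε, hεA⟩ := IsPseudocompact.exists_pos_le_abs hA
    (f.comp ⟨stoneCechUnit ∘ (↑), continuous_stoneCechUnit.comp continuous_subtype_val⟩) hfA
  have hcl : closure (stoneCechUnit '' A) ⊆ {q | ε ≤ |f q|} :=
    closure_minimal (by rintro _ ⟨a, ha, rfl⟩; exact hεA ⟨a, ha⟩)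
      (isClosed_le continuous_const (map_continuous f).abs)
  have hp' : ε ≤ |f p| := hcl hp
  rw [show f p = 0 from hpZ, abs_zero] at hp'
  linarith

lemma IsLocallyPseudocompact.range_subset_interior_upsilonSet [CompletelyRegularSpace X]
    (hX : IsLocallyPseudocompact X) :
    range (stoneCechUnit : X → StoneCech X) ⊆ interior (upsilonSet X) := by
  rintro _ ⟨x, rfl⟩
  obtain ⟨U, hU, hx, hUps⟩ := hX x
  obtain ⟨V, hV, rfl⟩ := isInducing_stoneCechUnit.isOpen_iff.1 hU
  refine interior_maximal ?_ hV hx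
  calc V ⊆ closure (V ∩ range stoneCechUnit) :=
        denseRange_stoneCechUnit.open_subset_closure_inter hV
    _ = closure (stoneCechUnit '' (stoneCechUnit ⁻¹' V)) := by rw [image_preimage_eq_inter_range]
    _ ⊆ closure (stoneCechUnit '' closure (stoneCechUnit ⁻¹' V)) :=
        closure_mono (image_mono subset_closure)
    _ ⊆ upsilonSet X := closure_image_stoneCechUnit_subset_upsilonSet hUps

lemma denseRange_codRestrict_stoneCechUnit {S : Set (StoneCech X)}
    (hS : ∀ x, stoneCechUnit x ∈ S) : DenseRange (S.codRestrict stoneCechUnit hS) := by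
  rw [DenseRange, Subtype.dense_iff, range_codRestrict, Subtype.image_preimage_coe,
    inter_eq_right.2 (range_subset_iff.2 hS), denseRange_stoneCechUnit.closure_eq]
  exact subset_univ S

lemma stoneCechExtend_codRestrict_apply {β : Type*} [TopologicalSpace β] [T2Space β]
    [CompactSpace β] {S : Set (StoneCech X)} (hS : ∀ x, stoneCechUnit x ∈ S) {h : S → β}
    (hh : Continuous h) (y : S) :
    stoneCechExtend (hh.comp (continuous_stoneCechUnit.codRestrict hS)) y = h y := by
  have hc := hh.comp (continuous_stoneCechUnit.codRestrict hS)
  exact congrFun ((denseRange_codRestrict_stoneCechUnit hS).equalizer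
    ((continuous_stoneCechExtend hc).comp continuous_subtype_val) hh
    (funext (stoneCechExtend_stoneCechUnit hc))) y

lemma subset_zetaSet_of_isZeroSet {Z : Set (StoneCech X)} (hZ : IsZeroSet Z)
    (hZX : Disjoint Z (range stoneCechUnit)) : Z ⊆ zetaSet X :=
  fun _ hp => Or.inr (subset_closure fun hpυ => (hpυ Z hZ hp).ne_empty hZX.inter_eq)

variable (X) in
/-- Given `g > 0` on `ζX`, extend `min g 1` from `X` to `H` on `βX`. The zero set of `H` misses
`X`, hence lies in `ζX`, where `H = min g 1 > 0`; so `H` is bounded away from `0` on compact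
`βX`. -/
theorem isPseudocompact_zetaSet : IsPseudocompact (zetaSet X) := by
  refine isPseudocompact_of_forall_pos fun g hg => ?_
  have hX : ∀ x, stoneCechUnit x ∈ zetaSet X := fun x => Or.inl (mem_range_self x)
  let h : zetaSet X → I :=
    fun y => ⟨min (g y) 1, le_min (hg y).le zero_le_one, min_le_right _ _⟩
  have hh : Continuous h := ((map_continuous g).min continuous_const).subtype_mk _
  have hhpos : ∀ y, 0 < (h y : ℝ) := fun y => lt_min (hg y) one_pos
  let H : C(StoneCech X, ℝ) :=
    ⟨_, continuous_subtype_val.comp (continuous_stoneCechExtend (hh.comp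
      (continuous_stoneCechUnit.codRestrict hX)))⟩
  have hH : ∀ y : zetaSet X, H y = h y := fun y =>
    congrArg Subtype.val (stoneCechExtend_codRestrict_apply hX hh y)
  have hH0 : ∀ q, H q ≠ 0 := by
    intro q hq
    have hZX : Disjoint (H ⁻¹' {0}) (range stoneCechUnit) := by
      refine disjoint_right.2 ?_
      rintro _ ⟨x, rfl⟩ hx
      exact (hhpos _).ne' ((hH ⟨_, hX x⟩).symm.trans hx)
    have hqζ : q ∈ zetaSet X := subset_zetaSet_of_isZeroSet ⟨H, rfl⟩ hZX hq
    exact (hhpos ⟨q, hqζ⟩).ne' ((hH ⟨q, hqζ⟩).symm.trans hq)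
  obtain ⟨ε, hε, hεH⟩ := isPseudocompact_of_compactSpace.exists_pos_le_abs H hH0
  refine ⟨ε, hε, fun y => ?_⟩
  calc ε ≤ |H y| := hεH y
    _ = min (g y) 1 := by rw [hH y, abs_of_pos (hhpos y)]
    _ ≤ g y := min_le_left _ _

end StoneCech

/-- For a Tychonoff space `X` the following are equivalent:
(1) `X` is locally pseudocompact;
(2) `X ⊆ int_{βX} υX`;
(3) `X` and `R(X) = cl_{βX}(βX \ υX)` are disjoint;
(4) `ζX \ X` is compact;
(5) `X` has a pseudocompactification with compact remainder. -/
theorem locallyPseudocompact_tfae (X : Type u) [TopologicalSpace X] [T2Space X]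
    [CompletelyRegularSpace X] :
    List.TFAE
      [∀ x : X, ∃ U : Set X, IsOpen U ∧ x ∈ U ∧ IsPseudocompactSet (closure U),
       Set.range (stoneCechUnit : X → StoneCech X) ⊆ interior (upsilonSet X),
       Disjoint (Set.range (stoneCechUnit : X → StoneCech X)) (closure (upsilonSet X)ᶜ),
       IsCompact (zetaSet X \ Set.range (stoneCechUnit : X → StoneCech X)),
       ∃ (Y : Type u) (_ : TopologicalSpace Y), T2Space Y ∧ CompletelyRegularSpace Y ∧
         ∃ e : X → Y, IsEmbedding e ∧ DenseRange e ∧ IsPseudocompact Y ∧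
           IsCompact (Set.range e)ᶜ] := by
  have : T35Space X := {}
  have hX : ∀ x, stoneCechUnit x ∈ zetaSet X := fun x => Or.inl (mem_range_self x)
  tfae_have 1 → 2 := IsLocallyPseudocompact.range_subset_interior_upsilonSet
  tfae_have 2 → 3 := fun h => by
    rw [closure_compl]
    exact disjoint_compl_right_iff_subset.2 h
  tfae_have 3 → 4 := fun h => by
    rw [zetaSet, union_sdiff_left, h.symm.sdiff_eq_left]
    exact isClosed_closure.isCompact
  tfae_have 4 → 5 := fun h => by
    refine ⟨zetaSet X, inferInstance, inferInstance, inferInstance, _,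
      isEmbedding_stoneCechUnit.codRestrict _ hX, denseRange_codRestrict_stoneCechUnit hX,
      isPseudocompact_zetaSet X, ?_⟩
    rwa [IsInducing.subtypeVal.isCompact_iff, range_codRestrict, ← preimage_compl,
      Subtype.image_preimage_coe, ← sdiff_eq]
  tfae_have 5 → 1 := fun ⟨Y, _, _, _, e, he, _, hY, hK⟩ => he.isLocallyPseudocompact hY hK
  tfae_finish
end

section
/- Let X be a Tychonoff space, let Y be a Tychonoff extension of X with compact remainder Y \ X, and let φ : βX → βY be the continuous extension of the identity map of X. Then φ is a quotient map, and φ is injective on βX \ φ⁻¹[Y \ X]; consequently βY coincides with the quotient space of βX obtained by contracting each fiber φ⁻¹(p), for p ∈ Y \ X, to the point p, with φ the quotient mapping. -/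
/-!
Since `βX` is compact and `βY` is Hausdorff, `φ` is a closed map, and its range is closed and
contains the dense set `Y`; so `φ` is a closed surjection, hence a quotient map.

For injectivity, let `φ p = φ q = r ∉ Y \ X` with `p ≠ q`. Take `g : βX → [0,1]` with
`g p = 0`, `g q = 1`, and `h : βY → [0,1]` vanishing on the compact set `Y \ X` with `h r = 1`.
Since `X` is open in `Y`, the function `h · (g ∘ e⁻¹)`, extended by `0` over `Y \ X`, is
continuous on `Y`, so it extends to some `W : βY → [0,1]`. Then `W ∘ φ = (h ∘ φ) · g` on the
dense set `X`, hence everywhere, and `W r` would equal both `g p = 0` and `g q = 1`.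
-/

open Set Topology

open Function

theorem Continuous.surjective_of_denseRange_comp {α β γ : Type*} [TopologicalSpace α]
    [CompactSpace α] [TopologicalSpace β] [T2Space β] {f : α → β} (hf : Continuous f)
    {g : γ → α} (hfg : DenseRange (f ∘ g)) : Surjective f := by
  have hdense : Dense (range f) := hfg.mono (range_comp_subset_range g f)
  rw [← range_eq_univ, ← (isCompact_range hf).isClosed.closure_eq, hdense.closure_eq]

theorem Continuous.mul_of_norm_le_of_continuousAt {Y R : Type*} [TopologicalSpace Y]
    [SeminormedRing R] {h G : Y → R} {C : ℝ} (hh : Continuous h) (hG : ∀ y, ‖G y‖ ≤ C)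
    (hGh : ∀ y, h y ≠ 0 → ContinuousAt G y) : Continuous fun y ↦ h y * G y := by
  refine continuous_iff_continuousAt.2 fun y ↦ ?_
  by_cases hy : h y = 0
  · rw [ContinuousAt, hy, zero_mul]
    refine squeeze_zero_norm (fun y' ↦ ?_) (a := fun y' ↦ ‖h y'‖ * C) ?_
    · exact (norm_mul_le _ _).trans (mul_le_mul_of_nonneg_left (hG y') (norm_nonneg _))
    · simpa [hy] using (hh.norm.mul_const C).tendsto y
  · exact hh.continuousAt.mul (hGh y hy)

theorem exists_continuous_comp_stoneCechUnit_eq {Y Z : Type*} [TopologicalSpace Y]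
    [TopologicalSpace Z] [T2Space Z] {s : Set Z} (hs : IsCompact s) {w : Y → Z}
    (hw : Continuous w) (hws : ∀ y, w y ∈ s) :
    ∃ W : StoneCech Y → Z, Continuous W ∧ W ∘ stoneCechUnit = w := by
  have : CompactSpace s := isCompact_iff_compactSpace.mp hs
  have hw' : Continuous fun y ↦ (⟨w y, hws y⟩ : s) := hw.subtype_mk _
  exact ⟨_, continuous_subtype_val.comp (continuous_stoneCechExtend hw'),
    funext fun y ↦ congrArg Subtype.val (congrFun (stoneCechExtend_extends hw') y)⟩

section OpenEmbedding

variable {X Y : Type*} [TopologicalSpace X] [TopologicalSpace Y] {e : X → Y}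
  {φ : StoneCech X → StoneCech Y}

theorem exists_comp_eq_mul_of_isOpenEmbedding (he : IsOpenEmbedding e) (hφ : Continuous φ)
    (hφe : ∀ x, φ (stoneCechUnit x) = stoneCechUnit (e x))
    (g : C(StoneCech X, ℝ)) (hg : ∀ t, g t ∈ Icc (0 : ℝ) 1)
    (h : C(StoneCech Y, ℝ)) (hh : ∀ t, h t ∈ Icc (0 : ℝ) 1)
    (hK : EqOn h 0 (stoneCechUnit '' (range e)ᶜ)) :
    ∃ W : StoneCech Y → ℝ, Continuous W ∧ ∀ t, W (φ t) = h (φ t) * g t := by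
  set G : Y → ℝ := extend e (g ∘ stoneCechUnit) 0
  have hGe : G ∘ e = g ∘ stoneCechUnit := extend_comp he.injective _ _
  have hG : ∀ y, G y ∈ Icc (0 : ℝ) 1 := by
    intro y
    rcases range_extend_subset e (g ∘ stoneCechUnit) 0 (mem_range_self y) with
      ⟨x, hx⟩ | ⟨_, _, hx⟩
    · simpa [G, ← hx] using hg (stoneCechUnit x)
    · simp [G, ← hx]
  have hGcont : ∀ y ∈ range e, ContinuousAt G y := by
    rintro _ ⟨x, rfl⟩
    rw [← he.continuousAt_iff, hGe]
    exact (g.continuous.comp continuous_stoneCechUnit).continuousAt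
  have hw : Continuous fun y ↦ h (stoneCechUnit y) * G y := by
    refine (h.continuous.comp continuous_stoneCechUnit).mul_of_norm_le_of_continuousAt
      (C := 1) (fun y ↦ ?_) fun y hy ↦ hGcont y ?_
    · rw [Real.norm_eq_abs, abs_le]
      exact ⟨by linarith [(hG y).1], (hG y).2⟩
    · by_contra hyX
      exact hy (hK ⟨y, hyX, rfl⟩)
  obtain ⟨W, hWc, hW⟩ := exists_continuous_comp_stoneCechUnit_eq isCompact_Icc hw
    fun y ↦ ⟨mul_nonneg (hh _).1 (hG y).1, mul_le_one₀ (hh _).2 (hG y).1 (hG y).2⟩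
  refine ⟨W, hWc, fun t ↦ congrFun (Continuous.ext_on denseRange_stoneCechUnit
    (hWc.comp hφ) ((h.continuous.comp hφ).mul g.continuous) ?_) t⟩
  rintro _ ⟨x, rfl⟩
  simp only [comp_apply, hφe, Pi.mul_apply]
  exact (congrFun hW (e x)).trans (congrArg _ (congrFun hGe x))

end OpenEmbedding

theorem quotient_of_stoneCech_extension_general (X Y : Type*) [TopologicalSpace X]
    [TopologicalSpace Y] [T2Space Y]
    (e : X → Y) (he : IsEmbedding e) (hd : DenseRange e)
    (hrem : IsCompact (Set.range e)ᶜ)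
    (φ : StoneCech X → StoneCech Y) (hφ : Continuous φ)
    (hφe : ∀ x : X, φ (stoneCechUnit x) = stoneCechUnit (e x)) :
    IsQuotientMap φ ∧
      Set.InjOn φ (φ ⁻¹' ((stoneCechUnit : Y → StoneCech Y) '' (Set.range e)ᶜ))ᶜ := by
  have heo : IsOpenEmbedding e := ⟨he, by simpa using hrem.isClosed.isOpen_compl⟩
  have hdense : DenseRange (φ ∘ stoneCechUnit) := by
    rw [show φ ∘ stoneCechUnit = stoneCechUnit ∘ e from funext hφe]
    exact denseRange_stoneCechUnit.comp hd continuous_stoneCechUnit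
  refine ⟨hφ.isClosedMap.isQuotientMap hφ (hφ.surjective_of_denseRange_comp hdense), ?_⟩
  intro p hp q _ hpq
  by_contra hne
  obtain ⟨g, hgp, hgq, hg⟩ := exists_continuous_zero_one_of_isClosed isClosed_singleton
    isClosed_singleton (disjoint_singleton.2 hne)
  obtain ⟨h, hhK, hhp, hh⟩ := exists_continuous_zero_one_of_isClosed
    (hrem.image continuous_stoneCechUnit).isClosed isClosed_singleton
    (disjoint_singleton_right.2 hp)
  obtain ⟨W, -, hW⟩ := exists_comp_eq_mul_of_isOpenEmbedding heo hφ hφe g hg h hh hhK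
  have h01 := (hW p).symm.trans (hpq ▸ hW q)
  simp [hgp rfl, hgq rfl, hhp rfl] at h01

/-- Let `Y` be a Tychonoff extension of a Tychonoff space `X` (via the dense embedding `e`)
with compact remainder, and let `φ : βX → βY` be the continuous extension of the identity of
`X`. Then `φ` is a quotient map and is injective outside the preimages of the points of
`Y \ X` (viewed in `βY`); hence `βY` is the quotient of `βX` obtained by contracting each
fiber `φ⁻¹(p)`, `p ∈ Y \ X`, to a point, with `φ` the quotient mapping. -/
theorem quotient_of_stoneCech_extension (X Y : Type*) [TopologicalSpace X] [T2Space X]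
    [CompletelyRegularSpace X] [TopologicalSpace Y] [T2Space Y] [CompletelyRegularSpace Y]
    (e : X → Y) (he : IsEmbedding e) (hd : DenseRange e)
    (hrem : IsCompact (Set.range e)ᶜ)
    (φ : StoneCech X → StoneCech Y) (hφ : Continuous φ)
    (hφe : ∀ x : X, φ (stoneCechUnit x) = stoneCechUnit (e x)) :
    IsQuotientMap φ ∧
      Set.InjOn φ (φ ⁻¹' ((stoneCechUnit : Y → StoneCech Y) '' (Set.range e)ᶜ))ᶜ :=
  quotient_of_stoneCech_extension_general X Y e he hd hrem φ hφ hφe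
end

section
/- Let X be a Tychonoff space, let Y be a Tychonoff extension of X with compact remainder Y \ X, let K be a compactification of Y, and let φ : βX → K be the continuous extension of the identity map of X. Then Y is pseudocompact if and only if cl_{βX}(βX \ υX) ⊆ φ⁻¹[Y \ X]. -/
open Set Topology

/-!
A point `p ∈ βX \ υX` is a zero of some `g ∈ C(βX)` that has no zero on `X`. If `φ p` were not
in the compact set `j[Y \ X]`, an Urysohn function `f` on `K` equal to `1` at `φ p` and `0` on
`j[Y \ X]` would make `(f - 1/2)⁺ / g`, extended by `0` off `X`, an unbounded continuous function
on `Y`: it vanishes near the remainder, while `(f ∘ φ - 1/2)⁺ ≤ M |g|` on `X`, hence on `βX`,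
fails at `p`.

Conversely, for `f ∈ C(Y)` let `H ∈ C(βX)` extend `1 / (1 + |f|)` from `X`. A zero `p` of `H`
lies outside `υX`, so `φ p = j y` with `y ∈ Y \ X`, and comparing limits along `X` near `p` gives
`H p = 1 / (1 + |f y|) ≠ 0`. So `H` is bounded away from `0` on the compact space `βX`, i.e. `f`
is bounded on `X`, and it is bounded on the compact remainder anyway.
-/

namespace Topology.IsOpenEmbedding

variable {X Y Z : Type*} [TopologicalSpace X] [TopologicalSpace Y] [TopologicalSpace Z] [Zero Z]

theorem continuous_extend_zero {e : X → Y} (he : IsOpenEmbedding e) {u : X → Z}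
    (hu : Continuous u) {V : Set Y} (hV : IsOpen V) (hVc : (range e)ᶜ ⊆ V)
    (huV : ∀ x, e x ∈ V → u x = 0) : Continuous (Function.extend e u 0) := by
  refine continuous_iff_continuousAt.2 fun y => ?_
  by_cases hy : y ∈ range e
  · obtain ⟨x, rfl⟩ := hy
    rw [← he.continuousAt_iff, Function.extend_comp he.injective]
    exact hu.continuousAt
  · refine (continuousAt_const : ContinuousAt (fun _ => (0 : Z)) y).congr ?_
    filter_upwards [hV.mem_nhds (hVc hy)] with z hz
    by_cases hz' : z ∈ range e
    · obtain ⟨x, rfl⟩ := hz'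
      rw [he.injective.extend_apply]
      exact (huV x hz).symm
    · rw [Function.extend_apply' _ _ _ hz']
      rfl

end Topology.IsOpenEmbedding

theorem DenseRange.apply_eq_of_comp_eq {X B Y K Z : Type*} [TopologicalSpace B]
    [TopologicalSpace Y] [TopologicalSpace K] [TopologicalSpace Z] [T2Space Z]
    {ι : X → B} (hι : DenseRange ι) {φ : B → K} (hφ : Continuous φ) {e : X → Y} {j : Y → K}
    (hj : IsInducing j) (hφe : ∀ x, φ (ι x) = j (e x)) {H : B → Z} (hH : Continuous H)
    {k : Y → Z} (hk : Continuous k) (hHk : ∀ x, H (ι x) = k (e x)) {p : B} {y : Y}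
    (hpy : φ p = j y) : H p = k y := by
  let l := Filter.comap ι (𝓝 p)
  have : l.NeBot := by
    rw [← Filter.map_neBot_iff ι, Filter.map_comap]
    exact hι.nhdsWithin_neBot p
  have hφι : Filter.Tendsto (j ∘ e) l (𝓝 (j y)) := by
    rw [← hpy, show j ∘ e = φ ∘ ι from funext fun x => (hφe x).symm]
    exact hφ.continuousAt.tendsto.comp Filter.tendsto_comap
  have he : Filter.Tendsto e l (𝓝 y) := hj.tendsto_nhds_iff.2 hφι
  have hHι : Filter.Tendsto (k ∘ e) l (𝓝 (H p)) := by
    rw [show k ∘ e = H ∘ ι from funext fun x => (hHk x).symm]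
    exact hH.continuousAt.tendsto.comp Filter.tendsto_comap
  exact tendsto_nhds_unique hHι (hk.continuousAt.tendsto.comp he)

theorem exists_stoneCech_extension_of_mem_Icc {X : Type*} [TopologicalSpace X] {f : X → ℝ}
    (hf : Continuous f) {a b : ℝ} (hf_mem : ∀ x, f x ∈ Icc a b) :
    ∃ F : C(StoneCech X, ℝ), ∀ x, F (stoneCechUnit x) = f x := by
  have hg : Continuous fun x => (⟨f x, hf_mem x⟩ : Icc a b) := hf.subtype_mk hf_mem
  exact ⟨⟨_, continuous_subtype_val.comp (continuous_stoneCechExtend hg)⟩,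
    fun x => congrArg Subtype.val (stoneCechExtend_stoneCechUnit hg x)⟩

theorem notMem_upsilonSet_iff {X : Type*} [TopologicalSpace X] {p : StoneCech X} :
    p ∉ upsilonSet X ↔ ∃ g : C(StoneCech X, ℝ), g p = 0 ∧ ∀ x, g (stoneCechUnit x) ≠ 0 := by
  simp only [upsilonSet, mem_ofPred_eq, IsZeroSet, not_forall, exists_prop,
    not_nonempty_iff_eq_empty]
  constructor
  · rintro ⟨_, ⟨g, rfl⟩, hp, hg⟩
    exact ⟨g, hp, fun x hx => (eq_empty_iff_forall_notMem.1 hg) _ ⟨hx, x, rfl⟩⟩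
  · rintro ⟨g, hp, hg⟩
    refine ⟨_, ⟨g, rfl⟩, hp, eq_empty_iff_forall_notMem.2 ?_⟩
    rintro _ ⟨hx, x, rfl⟩
    exact hg x hx

section Extension

variable {X Y K : Type*} [TopologicalSpace X] [TopologicalSpace Y] [TopologicalSpace K]
  {e : X → Y} {j : Y → K} {φ : StoneCech X → K}

theorem apply_mem_image_compl_range_of_notMem_upsilonSet [CompactSpace K] [T2Space K]
    (he : IsOpenEmbedding e) (hj : Continuous j) (hrem : IsCompact (range e)ᶜ)
    (hφ : Continuous φ) (hφe : ∀ x, φ (stoneCechUnit x) = j (e x)) (hY : IsPseudocompact Y)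
    {p : StoneCech X} (hp : p ∉ upsilonSet X) : φ p ∈ j '' (range e)ᶜ := by
  obtain ⟨g, hgp, hgX⟩ := notMem_upsilonSet_iff.1 hp
  by_contra hφp
  obtain ⟨f, hf0, hf1, -⟩ := exists_continuous_zero_one_of_isClosed
    (hrem.image hj).isClosed isClosed_singleton (disjoint_singleton_right.2 hφp)
  let u : X → ℝ := fun x => max (f (j (e x)) - 1 / 2) 0 / g (stoneCechUnit x)
  have hu : Continuous u :=
    Continuous.div (by fun_prop) (g.continuous.comp continuous_stoneCechUnit) hgX
  have hF := he.continuous_extend_zero hu (V := {y | f (j y) < 1 / 2})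
    (isOpen_lt (by fun_prop) continuous_const)
    (fun y hy => by simp [hf0 (mem_image_of_mem j hy)])
    (fun x hx => by
      simp only [u, max_eq_right (sub_nonpos.2 (show f (j (e x)) < 1 / 2 from hx).le), zero_div])
  obtain ⟨M, hM⟩ := hY ⟨_, hF⟩
  have hbound : ∀ q, max (f (φ q) - 1 / 2) 0 ≤ M * |g q| := by
    refine isClosed_property denseRange_stoneCechUnit (isClosed_le (by fun_prop) (by fun_prop))
      fun x => ?_
    have hux : |u x| ≤ M := by simpa [he.injective.extend_apply] using hM (e x)
    rw [abs_div, abs_of_nonneg (le_max_right _ _), div_le_iff₀ (abs_pos.2 (hgX x))] at hux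
    rwa [hφe]
  have hbound_p := hbound p
  rw [hf1 rfl, hgp] at hbound_p
  norm_num at hbound_p

theorem isPseudocompact_of_compl_upsilonSet_subset (he : Continuous e) (hj : IsInducing j)
    (hrem : IsCompact (range e)ᶜ) (hφ : Continuous φ)
    (hφe : ∀ x, φ (stoneCechUnit x) = j (e x))
    (hsub : (upsilonSet X)ᶜ ⊆ φ ⁻¹' (j '' (range e)ᶜ)) : IsPseudocompact Y := by
  intro f
  let k : Y → ℝ := fun y => (1 + |f y|)⁻¹
  have hk_pos : ∀ y, 0 < k y := fun y => by positivity
  have hk : Continuous k := Continuous.inv₀ (by fun_prop) fun y => (by positivity)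
  obtain ⟨H, hH⟩ : ∃ H : C(StoneCech X, ℝ), ∀ x, H (stoneCechUnit x) = k (e x) :=
    exists_stoneCech_extension_of_mem_Icc (hk.comp he) fun x =>
      ⟨(hk_pos _).le, inv_le_one_of_one_le₀ (le_add_of_nonneg_right (abs_nonneg _))⟩
  have hH_ne : ∀ q, H q ≠ 0 := by
    intro q hq
    obtain ⟨y, -, hy⟩ := hsub (notMem_upsilonSet_iff.2
      ⟨H, hq, fun x => (hH x).trans_ne (hk_pos _).ne'⟩)
    have hqy := denseRange_stoneCechUnit.apply_eq_of_comp_eq hφ hj hφe H.continuous hk hH hy.symm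
    exact (hk_pos y).ne' (hqy ▸ hq)
  obtain ⟨C, hC⟩ := isCompact_univ.exists_bound_of_continuousOn
    (H.continuous.inv₀ hH_ne).continuousOn
  obtain ⟨M, hM⟩ := hrem.exists_bound_of_continuousOn f.continuous.continuousOn
  refine ⟨max C M, fun y => ?_⟩
  by_cases hy : y ∈ range e
  · obtain ⟨x, rfl⟩ := hy
    have hx := hC (stoneCechUnit x) trivial
    rw [Pi.inv_apply, hH x, norm_inv, Real.norm_eq_abs, abs_of_pos (hk_pos _), inv_inv] at hx
    exact le_max_of_le_left (by linarith)
  · exact le_max_of_le_right (hM y hy)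

end Extension

theorem pseudocompact_iff_closure_subset_preimage_general (X Y K : Type*) [TopologicalSpace X]
    [TopologicalSpace Y] [T2Space Y]
    [TopologicalSpace K] [CompactSpace K] [T2Space K]
    (e : X → Y) (he : IsEmbedding e)
    (hrem : IsCompact (Set.range e)ᶜ)
    (j : Y → K) (hj : IsEmbedding j)
    (φ : StoneCech X → K) (hφ : Continuous φ)
    (hφe : ∀ x : X, φ (stoneCechUnit x) = j (e x)) :
    IsPseudocompact Y ↔ closure (upsilonSet X)ᶜ ⊆ φ ⁻¹' (j '' (Set.range e)ᶜ) := by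
  have he_open : IsOpenEmbedding e := ⟨he, isClosed_compl_iff.mp hrem.isClosed⟩
  have hrem_closed : IsClosed (φ ⁻¹' (j '' (Set.range e)ᶜ)) :=
    (hrem.image hj.continuous).isClosed.preimage hφ
  constructor
  · intro hY
    exact closure_minimal (fun p hp => apply_mem_image_compl_range_of_notMem_upsilonSet
      he_open hj.continuous hrem hφ hφe hY hp) hrem_closed
  · intro hsub
    exact isPseudocompact_of_compl_upsilonSet_subset he.continuous hj.isInducing hrem hφ hφe
      (subset_closure.trans hsub)

/-- Let `Y` be a Tychonoff extension of a Tychonoff space `X` (via the dense embedding `e`)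
with compact remainder, let `K` be a compactification of `Y` (via the dense embedding `j`),
and let `φ : βX → K` be the continuous extension of the identity of `X`. Then `Y` is
pseudocompact if and only if `cl_{βX}(βX \ υX) ⊆ φ⁻¹[Y \ X]`. -/
theorem pseudocompact_iff_closure_subset_preimage (X Y K : Type*) [TopologicalSpace X]
    [T2Space X] [CompletelyRegularSpace X] [TopologicalSpace Y] [T2Space Y]
    [CompletelyRegularSpace Y] [TopologicalSpace K] [CompactSpace K] [T2Space K]
    (e : X → Y) (he : IsEmbedding e) (hd : DenseRange e)
    (hrem : IsCompact (Set.range e)ᶜ)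
    (j : Y → K) (hj : IsEmbedding j) (hjd : DenseRange j)
    (φ : StoneCech X → K) (hφ : Continuous φ)
    (hφe : ∀ x : X, φ (stoneCechUnit x) = j (e x)) :
    IsPseudocompact Y ↔ closure (upsilonSet X)ᶜ ⊆ φ ⁻¹' (j '' (Set.range e)ᶜ) :=
  pseudocompact_iff_closure_subset_preimage_general X Y K e he hrem j hj φ hφ hφe
end
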